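/- arXiv:2506.09458 — 2 statements merged into one kernel-verified Lean document; each statement's English description precedes it below -/
import Mathlib

section
/- The evidenced-frame universal implication on sets of λ-terms satisfies eval and currying: defining φ₁ ⊃ Φ⃗ := {λx.p | ∀ v ∈ φ₁, ∀ φ ∈ Φ⃗, p[x := v] reduces to a value in φ} for a set Φ⃗ of propositions, the evidence e_eval := λx. (π₁ x)(π₂ x) satisfies (φ₁ ⊃ Φ⃗) ∧ φ₁ ⊢ φ for each φ ∈ Φ⃗, and if φ₁ ∧ φ₂ ⊢e φ for all φ ∈ Φ⃗ then φ₁ ⊢(λx₁.λx₂. e ⟨x₁,x₂⟩ )' φ₂ ⊃ Φ⃗ (with the outer evidence returning the inner abstraction as a value). -/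
/-- Untyped λ-terms with pairs and projections (de Bruijn representation). -/
inductive Tm : Type
  | var : ℕ → Tm
  | lam : Tm → Tm
  | app : Tm → Tm → Tm
  | pair : Tm → Tm → Tm
  | fst : Tm → Tm
  | snd : Tm → Tm

def Tm.lift (d : ℕ) : Tm → Tm
  | .var n => if n < d then .var n else .var (n + 1)
  | .lam t => .lam (t.lift (d + 1))
  | .app t u => .app (t.lift d) (u.lift d)
  | .pair t u => .pair (t.lift d) (u.lift d)
  | .fst t => .fst (t.lift d)
  | .snd t => .snd (t.lift d)

def Tm.subst : Tm → ℕ → Tm → Tm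
  | .var n, k, u => if n < k then .var n else if n = k then u else .var (n - 1)
  | .lam t, k, u => .lam (t.subst (k + 1) (u.lift 0))
  | .app t t', k, u => .app (t.subst k u) (t'.subst k u)
  | .pair t t', k, u => .pair (t.subst k u) (t'.subst k u)
  | .fst t, k, u => .fst (t.subst k u)
  | .snd t, k, u => .snd (t.subst k u)

/-- Values: variables, abstractions, and pairs of values. -/
inductive IsValue : Tm → Prop
  | var (n : ℕ) : IsValue (.var n)
  | lam (t : Tm) : IsValue (.lam t)
  | pair {v₁ v₂ : Tm} : IsValue v₁ → IsValue v₂ → IsValue (.pair v₁ v₂)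

/-- One-step reduction: β, projections on pairs of values, and congruence. -/
inductive Step : Tm → Tm → Prop
  | beta (t u : Tm) : Step (.app (.lam t) u) (t.subst 0 u)
  | fstPair {v₁ v₂} : IsValue v₁ → IsValue v₂ → Step (.fst (.pair v₁ v₂)) v₁
  | sndPair {v₁ v₂} : IsValue v₁ → IsValue v₂ → Step (.snd (.pair v₁ v₂)) v₂
  | lam {t t'} : Step t t' → Step (.lam t) (.lam t')
  | appL {t t' u} : Step t t' → Step (.app t u) (.app t' u)
  | appR {t u u'} : Step u u' → Step (.app t u) (.app t u')
  | pairL {t t' u} : Step t t' → Step (.pair t u) (.pair t' u)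
  | pairR {t u u'} : Step u u' → Step (.pair t u) (.pair t u')
  | fst {t t'} : Step t t' → Step (.fst t) (.fst t')
  | snd {t t'} : Step t t' → Step (.snd t) (.snd t')

def Steps : Tm → Tm → Prop := Relation.ReflTransGen Step

/-- Evidence relation: `φ₁ ⊢e φ₂` iff every `v ∈ φ₁` is mapped by `e` to some value of `φ₂`. -/
def Ev (φ₁ : Set Tm) (e : Tm) (φ₂ : Set Tm) : Prop :=
  ∀ v ∈ φ₁, ∃ w ∈ φ₂, Steps (.app e v) w

/-- Conjunction of propositions: pairs of members. -/
def conj (φ₁ φ₂ : Set Tm) : Set Tm :=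
  {t | ∃ v₁ ∈ φ₁, ∃ v₂ ∈ φ₂, t = .pair v₁ v₂}

/-- Universal implication `φ₁ ⊃ Φ⃗`: abstractions `λx.p` such that for every
`v ∈ φ₁` and every `φ ∈ Φ⃗`, `p[x := v]` reduces to a value of `φ`. -/
def uimp (φ₁ : Set Tm) (Φs : Set (Set Tm)) : Set Tm :=
  {t | ∃ p : Tm, t = .lam p ∧
    ∀ v ∈ φ₁, ∀ φ ∈ Φs, ∃ w ∈ φ, Steps (p.subst 0 v) w}

lemma subst_lift (t : Tm) : ∀ (k : ℕ) (u : Tm), (t.lift k).subst k u = t := by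
  induction t with
  | var n =>
    intro k u
    simp only [Tm.lift]
    split
    · simp [Tm.subst, *]
    · have h : ¬ n < k := by assumption
      have h1 : ¬ n + 1 < k := by omega
      have h2 : ¬ n + 1 = k := by omega
      simp [Tm.subst, h1, h2]
  | lam t ih => intro k u; simp [Tm.lift, Tm.subst, ih]
  | app t t' ih ih' => intro k u; simp [Tm.lift, Tm.subst, ih, ih']
  | pair t t' ih ih' => intro k u; simp [Tm.lift, Tm.subst, ih, ih']
  | fst t ih => intro k u; simp [Tm.lift, Tm.subst, ih]
  | snd t ih => intro k u; simp [Tm.lift, Tm.subst, ih]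

lemma lift_lift (t : Tm) : ∀ d : ℕ, (t.lift d).lift d = (t.lift d).lift (d + 1) := by
  induction t with
  | var n =>
    intro d
    simp only [Tm.lift]
    by_cases h : n < d
    · simp [Tm.lift, h, Nat.lt_succ_of_lt h]
    · simp only [if_neg h]
      have h1 : ¬ n + 1 < d := by omega
      have h2 : ¬ n + 1 < d + 1 := by omega
      simp [Tm.lift, h1, h2]
  | lam t ih => intro d; simp [Tm.lift, ih]
  | app t t' ih ih' => intro d; simp [Tm.lift, ih, ih']
  | pair t t' ih ih' => intro d; simp [Tm.lift, ih, ih']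
  | fst t ih => intro d; simp [Tm.lift, ih]
  | snd t ih => intro d; simp [Tm.lift, ih]

/-- The evidenced-frame universal implication satisfies eval and currying:
`e_eval := λx. (π₁ x)(π₂ x)` evidences `(φ₁ ⊃ Φ⃗) ∧ φ₁ ⊢ φ` for each `φ ∈ Φ⃗`,
and if `φ₁ ∧ φ₂ ⊢e φ` for all `φ ∈ Φ⃗` then the evidence
`λx₁. λx₂. e ⟨x₁, x₂⟩` takes `φ₁` to `φ₂ ⊃ Φ⃗` (returning the inner abstraction
as a value). -/
theorem evidenced_frame_universal_implication :
    (∀ (φ₁ : Set Tm) (Φs : Set (Set Tm)), (∀ v ∈ φ₁, IsValue v) →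
      ∀ φ ∈ Φs, Ev (conj (uimp φ₁ Φs) φ₁) (.lam (.app (.fst (.var 0)) (.snd (.var 0)))) φ) ∧
    (∀ (φ₁ φ₂ : Set Tm) (Φs : Set (Set Tm)) (e : Tm),
      (∀ v ∈ φ₁, IsValue v) → (∀ v ∈ φ₂, IsValue v) →
      (∀ φ ∈ Φs, Ev (conj φ₁ φ₂) e φ) →
      Ev φ₁ (.lam (.lam (.app ((e.lift 0).lift 0) (.pair (.var 1) (.var 0)))))
        (uimp φ₂ Φs)) := by
  constructor
  · rintro φ₁ Φs hval φ hφ v ⟨f, hf, v₁, hv₁, rfl⟩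
    obtain ⟨p, rfl, hp⟩ := hf
    obtain ⟨w, hw, hsteps⟩ := hp v₁ hv₁ φ hφ
    refine ⟨w, hw, ?_⟩
    have h1 : Step (Tm.app (.lam (.app (.fst (.var 0)) (.snd (.var 0)))) (.pair (.lam p) v₁))
        ((Tm.app (.fst (.var 0)) (.snd (.var 0))).subst 0 (.pair (.lam p) v₁)) :=
      Step.beta _ _
    have hval1 : IsValue v₁ := hval v₁ hv₁
    simp only [Tm.subst, if_pos rfl, Nat.lt_irrefl, if_neg (Nat.lt_irrefl 0)] at h1
    refine Relation.ReflTransGen.head h1 ?_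
    refine Relation.ReflTransGen.head (Step.appL (Step.fstPair (IsValue.lam p) hval1)) ?_
    refine Relation.ReflTransGen.head (Step.appR (Step.sndPair (IsValue.lam p) hval1)) ?_
    exact Relation.ReflTransGen.head (Step.beta _ _) hsteps
  · rintro φ₁ φ₂ Φs e hval1 hval2 hev v₁ hv₁
    refine ⟨Tm.lam (.app (e.lift 0) (.pair (v₁.lift 0) (.var 0))), ?_, ?_⟩
    · refine ⟨_, rfl, ?_⟩
      intro v₂ hv₂ φ hφ
      obtain ⟨w, hw, hsteps⟩ := hev φ hφ (.pair v₁ v₂) ⟨v₁, hv₁, v₂, hv₂, rfl⟩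
      refine ⟨w, hw, ?_⟩
      have : (Tm.app (e.lift 0) (.pair (v₁.lift 0) (.var 0))).subst 0 v₂
          = Tm.app e (.pair v₁ v₂) := by
        simp [Tm.subst, subst_lift]
      rw [this]
      exact hsteps
    · have h1 : Step
          (Tm.app (.lam (.lam (.app ((e.lift 0).lift 0) (.pair (.var 1) (.var 0))))) v₁)
          ((Tm.lam (.app ((e.lift 0).lift 0) (.pair (.var 1) (.var 0)))).subst 0 v₁) :=
        Step.beta _ _
      have h2 : (Tm.lam (.app ((e.lift 0).lift 0) (.pair (.var 1) (.var 0)))).subst 0 v₁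
          = Tm.lam (.app (e.lift 0) (.pair (v₁.lift 0) (.var 0))) := by
        simp [Tm.subst, lift_lift, subst_lift]
      rw [h2] at h1
      exact Relation.ReflTransGen.single h1
end

section
/- Soundness of a monadic realizability translation for the implication fragment: if Ψ ⊢ ψ₁ ⊃ ψ₂ and Ψ ⊢ ψ₁ are realized by monadic programs p₀ : M(⟦ψ₁⟧ → M⟦ψ₂⟧) and p₁ : M⟦ψ₁⟧ satisfying their translated specifications, then the program bind x₀ ← p₀ in (bind x₁ ← p₁ in x₀ x₁) has type M⟦ψ₂⟧ and realizes ψ₂, using only the modality rules: return-introduction, bind-collapse, and monotonicity. -/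
/-- Soundness of the monadic realizability translation for the implication
fragment: given an abstract monad `M` (with `pure` and `bind`) and a modality
`after` satisfying return-introduction (Mod-I), bind-collapse (Mod-E), and
monotonicity (Mon), if `p₀ : M (A → M B)` realizes the implication `ψ₁ ⊃ ψ₂`
(i.e. after running it one obtains `r` such that for every realizer `x₁` of
`ψ₁`, `r x₁` computes a realizer of `ψ₂`) and `p₁ : M A` computes a realizer of
`ψ₁`, then `bind x₀ ← p₀ in (bind x₁ ← p₁ in x₀ x₁)` — which has type `M B` —
computes a realizer of `ψ₂`. -/
theorem monadic_realizability_imp_soundness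
    (M : Type → Type)
    (pure : ∀ {α : Type}, α → M α)
    (bind : ∀ {α β : Type}, M α → (α → M β) → M β)
    (after : ∀ {α : Type}, M α → (α → Prop) → Prop)
    (modI : ∀ {α : Type} (a : α) (φ : α → Prop), φ a → after (pure a) φ)
    (modE : ∀ {α β : Type} (p₁ : M α) (p₂ : α → M β) (φ : β → Prop),
      after p₁ (fun x₁ => after (p₂ x₁) φ) → after (bind p₁ p₂) φ)
    (mon : ∀ {α : Type} (p : M α) (φ₁ φ₂ : α → Prop),
      (∀ x, φ₁ x → φ₂ x) → after p φ₁ → after p φ₂)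
    (A B : Type) (R₁ : A → Prop) (R₂ : B → Prop)
    (p₀ : M (A → M B)) (p₁ : M A)
    (h₀ : after p₀ (fun r => ∀ x₁, R₁ x₁ → after (r x₁) R₂))
    (h₁ : after p₁ R₁) :
    after (bind p₀ (fun x₀ => bind p₁ (fun x₁ => x₀ x₁))) R₂ := by
  apply modE
  refine mon _ _ _ ?_ h₀
  intro r hr
  apply modE
  exact mon _ _ _ (fun x hx => hr x hx) h₁
end
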